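/- arXiv:1802.10400 — 5 statements merged into one kernel-verified Lean document; each statement's English description precedes it below -/
import Mathlib

section
/- Let M be a module over (S, E, α) and let {S_p | p ∈ P} be any partition of S, with sub-modules M_p over (S_p, E_p ∪ τ_p(S ∖ S_p), α_p) as defined from the corresponding partition {E_p} of E and bijections τ_p : S → Q_p onto fresh pairwise disjoint sets Q_p. Then there exists a recursive wiring ω such that M = ∘_ω (⋃_{p ∈ P} M_p), where ⋃ denotes the empty non-recursive wiring of the modules M_p. -/
open Classical

/-!
Boolean automata networks with external inputs ("modules") and wirings, after
Perrot, Perrotin, Sené, "A framework for (de)composing with Boolean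
automata networks".  Statement 3: any partition of a module can be wired back
into the original module using the empty non-recursive wiring (disjoint
union) followed by a recursive wiring.
-/

/-- A module over `(S, E, α)`: a Boolean automata network with external inputs.
`f s` is the local function of automaton `s`. -/
@[ext]
structure BANModule (U : Type) where
  S : Set U
  E : Set U
  α : U → Set U
  f : U → (U → Bool) → Bool

namespace BANModule

variable {U : Type}

/-- `M` is a genuine module over `(S, E, α)`: the states and inputs are disjoint,
`α` is an input declaration (the sets `α s` for `s ∈ S` form a partition of `E`),
and the local function of `s ∈ S` is a Boolean function over `S ∪ α s`
(normalised to the constant `false` outside of `S`). -/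
def Valid (M : BANModule U) : Prop :=
  Disjoint M.S M.E ∧
  (∀ s, s ∉ M.S → M.α s = ∅) ∧
  (∀ s ∈ M.S, M.α s ⊆ M.E) ∧
  (∀ e ∈ M.E, ∃! s, s ∈ M.S ∧ e ∈ M.α s) ∧
  (∀ s, s ∉ M.S → M.f s = fun _ => false) ∧
  (∀ s ∈ M.S, ∀ x y : U → Bool, (∀ u ∈ M.S ∪ M.α s, x u = y u) → M.f s x = M.f s y)

/-- Substitution along a partial map `ω`: the coordinate `u` reads the value
`x (ω u)` when `ω u` is defined, and `x u` otherwise. -/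
def subst (ω : U → Option U) (x : U → Bool) : U → Bool :=
  fun u => (ω u).elim (x u) x

/-- `ω` is a recursive wiring of `M`: a partial map from `E` to `S`. -/
def RecWiring (M : BANModule U) (ω : U → Option U) : Prop :=
  ∀ e t, ω e = some t → e ∈ M.E ∧ t ∈ M.S

/-- The module `∘_ω M` resulting from the recursive wiring `ω` of `M`:
the inputs in `dom ω` disappear, and each local function reads any wired
input `e ∈ dom ω` from the state coordinate `ω e`. -/
def recWire (M : BANModule U) (ω : U → Option U) : BANModule U where
  S := M.S
  E := M.E \ {e | ω e ≠ none}
  α := fun s => M.α s \ {e | ω e ≠ none}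
  f := fun s x => M.f s (subst ω x)

/-- The disjoint union `⋃_{p ∈ P} M_p` of a family of modules: the iterated
empty non-recursive wiring of the family. -/
noncomputable def famUnion {P : Type} (Mf : P → BANModule U) : BANModule U where
  S := ⋃ p, (Mf p).S
  E := ⋃ p, (Mf p).E
  α := fun s => ⋃ p, (Mf p).α s
  f := fun s x => if h : ∃ p, s ∈ (Mf p).S then (Mf h.choose).f s x else false

/-- The sub-module `M_p` of `M` induced by a part `Sp ⊆ S` of a partition of `S`,
with respect to an injection `τ` renaming the missing states `S ∖ Sp` into fresh
input names: it is a module over `(Sp, E_p ∪ τ(S ∖ Sp))` (where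
`E_p = ⋃_{s ∈ Sp} α s`), and for `s ∈ Sp` its local function is that of `M`,
reading each missing state `u ∈ S ∖ Sp` from the fresh input `τ u`. -/
noncomputable def subModule (M : BANModule U) (Sp : Set U) (τ : U → U) : BANModule U where
  S := Sp
  E := (⋃ s ∈ Sp, M.α s) ∪ (τ '' (M.S \ Sp))
  α := fun s => if s ∈ Sp then M.α s ∪ (τ '' (M.S \ Sp)) else ∅
  f := fun s x =>
    if s ∈ Sp then M.f s (fun u => if u ∈ M.S \ Sp then x (τ u) else x u) else false

end BANModule

/-- Let `M` be a module over `(S, E, α)` and `{S_p | p ∈ P}` any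
partition of `S`, with sub-modules `M_p` over `(S_p, E_p ∪ τ_p(S ∖ S_p), α_p)`
defined from the corresponding partition `{E_p}` of `E` and bijections
`τ_p : S → Q_p` onto fresh pairwise disjoint sets `Q_p`.  Then there exists a
recursive wiring `ω` such that `M = ∘_ω (⋃_{p ∈ P} M_p)`, where `⋃` denotes the
empty non-recursive wiring of the modules `M_p`. -/
theorem recWire_famUnion_subModule (U P : Type) (M : BANModule U) (hM : M.Valid)
    (Sp : P → Set U)
    (hdisj : Pairwise fun p q => Disjoint (Sp p) (Sp q))
    (hcover : ⋃ p, Sp p = M.S)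
    (hne : ∀ p, (Sp p).Nonempty)
    (Q : P → Set U) (τ : P → U → U)
    (hτinj : ∀ p, Set.InjOn (τ p) M.S)
    (hτim : ∀ p, τ p '' M.S = Q p)
    (hQS : ∀ p, Disjoint (Q p) M.S)
    (hQE : ∀ p, Disjoint (Q p) M.E)
    (hQQ : Pairwise fun p q => Disjoint (Q p) (Q q)) :
    ∃ ω : U → Option U,
      BANModule.RecWiring (BANModule.famUnion fun p => M.subModule (Sp p) (τ p)) ω ∧
      BANModule.recWire (BANModule.famUnion fun p => M.subModule (Sp p) (τ p)) ω = M := by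

  classical
  obtain ⟨hSE, hαout, hαE, hαpart, hfout, hfloc⟩ := hM
  -- the wiring: each fresh name `τ p s` (for `s ∈ S \ Sp p`) is wired to `s`
  set ω : U → Option U := fun u =>
    if h : ∃ s, s ∈ M.S ∧ ∃ p, s ∉ Sp p ∧ τ p s = u then some h.choose else none with hω
  -- basic facts
  have hτQ : ∀ p s, s ∈ M.S → τ p s ∈ Q p := by
    intro p s hs; rw [← hτim p]; exact ⟨s, hs, rfl⟩
  have hω_eq : ∀ p s, s ∈ M.S → s ∉ Sp p → ω (τ p s) = some s := by
    intro p s hs hsp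
    have h : ∃ s', s' ∈ M.S ∧ ∃ q, s' ∉ Sp q ∧ τ q s' = τ p s := ⟨s, hs, p, hsp, rfl⟩
    simp only [hω, dif_pos h]
    obtain ⟨hs', q, hq, hτq⟩ := h.choose_spec
    have hpq : q = p := by
      by_contra hne'
      exact (hQQ hne').ne_of_mem (hτq ▸ hτQ q _ hs') (hτQ p s hs) rfl
    subst hpq
    exact congrArg some (hτinj q hs' hs hτq)
  have hω_none : ∀ u, u ∈ M.S ∪ M.E → ω u = none := by
    intro u hu
    simp only [hω]
    rw [dif_neg]
    rintro ⟨s, hs, p, -, rfl⟩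
    rcases hu with hu | hu
    · exact (hQS p).ne_of_mem (hτQ p s hs) hu rfl
    · exact (hQE p).ne_of_mem (hτQ p s hs) hu rfl
  have hω_dom : ∀ u, ω u ≠ none ↔ u ∈ ⋃ p, τ p '' (M.S \ Sp p) := by
    intro u
    constructor
    · intro h
      by_cases hh : ∃ s, s ∈ M.S ∧ ∃ p, s ∉ Sp p ∧ τ p s = u
      · obtain ⟨s, hs, p, hsp, hτs⟩ := hh
        exact Set.mem_iUnion.2 ⟨p, s, ⟨hs, hsp⟩, hτs⟩
      · exact absurd (by simp [hω, dif_neg hh]) h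
    · rintro h
      obtain ⟨p, s, ⟨hs, hsp⟩, rfl⟩ := Set.mem_iUnion.1 h
      rw [hω_eq p s hs hsp]; simp
  -- the unique part containing a given state
  have hpart_mem : ∀ s ∈ M.S, ∃ p, s ∈ Sp p := by
    intro s hs; exact Set.mem_iUnion.1 (hcover ▸ hs)
  have hpart_uniq : ∀ s p q, s ∈ Sp p → s ∈ Sp q → p = q := by
    intro s p q hp hq
    by_contra hne'
    exact (hdisj hne').ne_of_mem hp hq rfl
  have hSpS : ∀ p, Sp p ⊆ M.S := by
    intro p s hs; exact hcover ▸ Set.mem_iUnion.2 ⟨p, hs⟩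
  -- E as union of the α s
  have hEα : (⋃ p, ⋃ s ∈ Sp p, M.α s) = M.E := by
    apply Set.Subset.antisymm
    · intro e he
      obtain ⟨p, hp⟩ := Set.mem_iUnion.1 he
      obtain ⟨s, hs, hes⟩ := Set.mem_iUnion₂.1 hp
      exact hαE s (hSpS p hs) hes
    · intro e he
      obtain ⟨s, ⟨hsS, hes⟩, -⟩ := hαpart e he
      obtain ⟨p, hp⟩ := hpart_mem s hsS
      exact Set.mem_iUnion.2 ⟨p, Set.mem_iUnion₂.2 ⟨s, hp, hes⟩⟩
  -- images of missing states are in the dom of ω, and disjoint from E and S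
  have hdomQ : ∀ p, τ p '' (M.S \ Sp p) ⊆ Q p := by
    rintro p u ⟨s, hs, rfl⟩; exact hτQ p s hs.1
  refine ⟨ω, ?_, ?_⟩
  · -- RecWiring
    intro e t het
    have hne2 : ω e ≠ none := by rw [het]; simp
    obtain ⟨p, s, ⟨hs, hsp⟩, rfl⟩ := Set.mem_iUnion.1 ((hω_dom e).1 hne2)
    rw [hω_eq p s hs hsp] at het
    obtain ⟨q, hq⟩ := hpart_mem s hs
    refine ⟨?_, ?_⟩
    · show τ p s ∈ ⋃ r, ((⋃ u ∈ Sp r, M.α u) ∪ (τ r '' (M.S \ Sp r)))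
      exact Set.mem_iUnion.2 ⟨p, Or.inr ⟨s, ⟨hs, hsp⟩, rfl⟩⟩
    · show t ∈ ⋃ r, Sp r
      cases het
      exact Set.mem_iUnion.2 ⟨q, hq⟩
  · -- the equality of modules
    refine BANModule.ext hcover ?_ ?_ ?_
    · -- E
      show (⋃ p, ((⋃ s ∈ Sp p, M.α s) ∪ (τ p '' (M.S \ Sp p)))) \ {e | ω e ≠ none} = M.E
      ext u
      constructor
      · rintro ⟨hu, hu2⟩
        simp only [Set.mem_setOf_eq, not_not] at hu2
        obtain ⟨p, hp⟩ := Set.mem_iUnion.1 hu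
        rcases hp with hp | hp
        · exact hEα ▸ Set.mem_iUnion.2 ⟨p, hp⟩
        · obtain ⟨s, hsp, rfl⟩ := hp
          rw [hω_eq p s hsp.1 hsp.2] at hu2
          exact absurd hu2 (by simp)
      · intro hu
        refine ⟨?_, ?_⟩
        · obtain ⟨p, hp⟩ := Set.mem_iUnion.1 (hEα ▸ hu : u ∈ ⋃ p, ⋃ s ∈ Sp p, M.α s)
          exact Set.mem_iUnion.2 ⟨p, Or.inl hp⟩
        · simp only [Set.mem_setOf_eq, not_not]
          exact hω_none u (Or.inr hu)
    · -- α
      funext s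
      show (⋃ p, (if s ∈ Sp p then M.α s ∪ (τ p '' (M.S \ Sp p)) else ∅)) \
        {e | ω e ≠ none} = M.α s
      by_cases hsS : s ∈ M.S
      · obtain ⟨p, hp⟩ := hpart_mem s hsS
        have hU : (⋃ q, (if s ∈ Sp q then M.α s ∪ (τ q '' (M.S \ Sp q)) else ∅))
            = M.α s ∪ (τ p '' (M.S \ Sp p)) := by
          apply Set.Subset.antisymm
          · intro u hu
            obtain ⟨q, hq⟩ := Set.mem_iUnion.1 hu
            by_cases hsq : s ∈ Sp q
            · rwa [hpart_uniq s q p hsq hp, if_pos hp] at hq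
            · rw [if_neg hsq] at hq; exact absurd hq (Set.notMem_empty u)
          · intro u hu
            exact Set.mem_iUnion.2 ⟨p, by rwa [if_pos hp]⟩
        rw [hU]
        ext u
        constructor
        · rintro ⟨hu, hu2⟩
          simp only [Set.mem_setOf_eq, not_not] at hu2
          rcases hu with hu | hu
          · exact hu
          · obtain ⟨t, ht, rfl⟩ := hu
            rw [hω_eq p t ht.1 ht.2] at hu2
            exact absurd hu2 (by simp)
        · intro hu
          refine ⟨Or.inl hu, ?_⟩
          simp only [Set.mem_setOf_eq, not_not]
          exact hω_none u (Or.inr (hαE s hsS hu))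
      · have hU : (⋃ q, (if s ∈ Sp q then M.α s ∪ (τ q '' (M.S \ Sp q)) else ∅))
            = (∅ : Set U) := by
          apply Set.eq_empty_of_forall_notMem
          intro u hu
          obtain ⟨q, hq⟩ := Set.mem_iUnion.1 hu
          rw [if_neg (fun h => hsS (hSpS q h))] at hq
          exact hq
        rw [hU, hαout s hsS, Set.empty_diff]
      -- f
    · funext s x
      show (BANModule.famUnion fun p => M.subModule (Sp p) (τ p)).f s
        (BANModule.subst ω x) = M.f s x
      by_cases hsS : s ∈ M.S
      · obtain ⟨p, hp⟩ := hpart_mem s hsS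
        simp only [BANModule.famUnion, BANModule.subModule]
        have hex : ∃ q, s ∈ Sp q := ⟨p, hp⟩
        erw [dif_pos hex, if_pos hex.choose_spec]
        apply hfloc s hsS
        intro u hu
        by_cases hmem : u ∈ M.S \ Sp hex.choose
        · erw [if_pos hmem]
          show (ω (τ hex.choose u)).elim (x (τ hex.choose u)) x = x u
          rw [hω_eq hex.choose u hmem.1 hmem.2]
          rfl
        · erw [if_neg hmem]
          show (ω u).elim (x u) x = x u
          have : u ∈ M.S ∪ M.E := by
            rcases hu with hu | hu
            · exact Or.inl hu
            · exact Or.inr (hαE s hsS hu)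
          rw [hω_none u this]
          rfl
      · have hex : ¬ ∃ q, s ∈ (M.subModule (Sp q) (τ q)).S := by
          rintro ⟨q, hq⟩
          exact hsS (hSpS q hq)
        simp only [BANModule.famUnion, dif_neg hex]
        rw [hfout s hsS]
end

section
/- The set 𝓜 of all modules equals the closure of the set 𝓜₁ of all modules of size 1 under the set of all recursive and non-recursive wiring operators: 𝓜 = (𝓜₁)‾^ω. -/
open Classical

namespace BANModule

variable {U : Type}

/-- The empty module `∅`, over `(∅, ∅)`. -/
def emptyModule (U : Type) : BANModule U where
  S := ∅
  E := ∅
  α := fun _ => ∅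
  f := fun _ _ => false

/-- `ω` is a non-recursive wiring from `M` to `M'`: the two modules are over
pairwise disjoint sets and `ω` is a partial map from `E'` to `S`. -/
def NonRecWiring (M M' : BANModule U) (ω : U → Option U) : Prop :=
  Disjoint M.S M'.S ∧ Disjoint M.E M'.E ∧ Disjoint M.S M'.E ∧ Disjoint M'.S M.E ∧
  ∀ e t, ω e = some t → e ∈ M'.E ∧ t ∈ M.S

/-- The module `M ↣_ω M'` resulting from the non-recursive wiring `ω` from `M`
to `M'`. -/
noncomputable def nonRecWire (M M' : BANModule U) (ω : U → Option U) : BANModule U where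
  S := M.S ∪ M'.S
  E := (M.E ∪ M'.E) \ {e | ω e ≠ none}
  α := fun s => (M.α s ∪ M'.α s) \ {e | ω e ≠ none}
  f := fun s x =>
    if s ∈ M.S then M.f s x
    else if s ∈ M'.S then M'.f s (subst ω x)
    else false

/-- The total recursive wiring operator `∘_ω`: it returns the empty module when
`ω` is not a recursive wiring of its argument. -/
noncomputable def recWireOp (ω : U → Option U) (M : BANModule U) : BANModule U :=
  if RecWiring M ω then recWire M ω else emptyModule U

/-- The total non-recursive wiring operator `↣_ω`: it returns the empty module
when `ω` is not a non-recursive wiring between its arguments. -/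
noncomputable def nonRecWireOp (ω : U → Option U) (M M' : BANModule U) : BANModule U :=
  if NonRecWiring M M' ω then nonRecWire M M' ω else emptyModule U

/-- The closure `A‾^ω` of a set `A` of modules under all the wiring operators
`↣_ω` and `∘_ω`: the smallest superset of `A` closed under all these
operators, defined inductively. -/
inductive InClosure (A : Set (BANModule U)) : BANModule U → Prop where
  | base {M : BANModule U} : M ∈ A → InClosure A M
  | recw (ω : U → Option U) {M : BANModule U} :
      InClosure A M → InClosure A (recWireOp ω M)
  | nonrecw (ω : U → Option U) {M M' : BANModule U} :
      InClosure A M → InClosure A M' → InClosure A (nonRecWireOp ω M M')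

end BANModule
namespace BANModule

variable {U : Type}

lemma valid_empty : (emptyModule U).Valid := by
  refine ⟨?_, ?_, ?_, ?_, ?_, ?_⟩ <;> simp [emptyModule]

lemma recWire_valid {M : BANModule U} {ω : U → Option U} (hM : M.Valid)
    (hω : M.RecWiring ω) : (M.recWire ω).Valid := by
  obtain ⟨h1, h2, h3, h4, h5, h6⟩ := hM
  refine ⟨h1.mono_right Set.diff_subset, ?_, ?_, ?_, ?_, ?_⟩
  · intro s hs; simp [recWire, h2 s hs]
  · intro s hs; exact Set.diff_subset_diff_left (h3 s hs)
  · rintro e ⟨heE, heD⟩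
    obtain ⟨s, ⟨hsS, hsα⟩, huniq⟩ := h4 e heE
    exact ⟨s, ⟨hsS, hsα, heD⟩, fun t ⟨htS, htα, _⟩ => huniq t ⟨htS, htα⟩⟩
  · intro s hs; funext x; simp [recWire, h5 s hs]
  · intro s hs x y hxy
    refine h6 s hs _ _ ?_
    intro u hu
    rcases hu with hu | hu
    · have : ω u = none := by
        cases hωu : ω u with
        | none => rfl
        | some t => exact absurd ((hω u t hωu).1) (fun h => h1.ne_of_mem hu h rfl)
      simp only [subst, this, Option.elim]
      exact hxy u (Or.inl hu)
    · cases hωu : ω u with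
      | none =>
        simp only [subst, hωu, Option.elim]
        exact hxy u (Or.inr ⟨hu, by simp [hωu]⟩)
      | some t =>
        simp only [subst, hωu, Option.elim]
        exact hxy t (Or.inl (hω u t hωu).2)

lemma nonRecWire_valid {M M' : BANModule U} {ω : U → Option U} (hM : M.Valid)
    (hM' : M'.Valid) (hω : M.NonRecWiring M' ω) : (M.nonRecWire M' ω).Valid := by
  obtain ⟨h1, h2, h3, h4, h5, h6⟩ := hM
  obtain ⟨h1', h2', h3', h4', h5', h6'⟩ := hM'
  obtain ⟨d1, d2, d3, d4, hω⟩ := hω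
  have hαE : ∀ s ∈ M.S, ∀ e ∈ M.α s, e ∈ M.E := fun s hs e he => h3 s hs he
  have hαE' : ∀ s ∈ M'.S, ∀ e ∈ M'.α s, e ∈ M'.E := fun s hs e he => h3' s hs he
  -- a state never carries `some` under ω
  have hωS : ∀ u, u ∈ M.S ∪ M'.S → ω u = none := by
    intro u hu
    cases hωu : ω u with
    | none => rfl
    | some t =>
      have hE' := (hω u t hωu).1
      rcases hu with hu | hu
      · exact absurd rfl (d3.ne_of_mem hu hE')
      · exact absurd rfl (h1'.ne_of_mem hu hE')
  refine ⟨?_, ?_, ?_, ?_, ?_, ?_⟩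
  · refine Set.disjoint_left.2 ?_
    rintro u (hu | hu) ⟨hu2, -⟩
    · rcases hu2 with h | h
      · exact h1.ne_of_mem hu h rfl
      · exact d3.ne_of_mem hu h rfl
    · rcases hu2 with h | h
      · exact d4.ne_of_mem hu h rfl
      · exact h1'.ne_of_mem hu h rfl
  · intro s hs
    simp only [nonRecWire, Set.mem_union, not_or] at hs ⊢
    rw [h2 s hs.1, h2' s hs.2]
    simp
  · rintro s hs e ⟨he, heD⟩
    rcases he with he | he
    · rcases hs with hs | hs
      · exact ⟨Or.inl (h3 s hs he), heD⟩
      · rw [h2 s (fun h => (Set.disjoint_left.1 d1) h hs)] at he; exact absurd he (Set.notMem_empty e)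
    · rcases hs with hs | hs
      · rw [h2' s (fun h => (Set.disjoint_left.1 d1) hs h)] at he; exact absurd he (Set.notMem_empty e)
      · exact ⟨Or.inr (h3' s hs he), heD⟩
  · rintro e ⟨he, heD⟩
    rcases he with he | he
    · obtain ⟨t, ⟨htS, htα⟩, huniq⟩ := h4 e he
      refine ⟨t, ⟨Or.inl htS, ⟨Or.inl htα, heD⟩⟩, ?_⟩
      rintro u ⟨huS, huα, -⟩
      rcases huα with huα | huα
      · rcases huS with huS | huS
        · exact huniq u ⟨huS, huα⟩
        · rw [h2 u (fun h => (Set.disjoint_left.1 d1) h huS)] at huα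
          exact absurd huα (Set.notMem_empty e)
      · have huS' : u ∈ M'.S := by
          rcases huS with huS | huS
          · rw [h2' u (fun h => (Set.disjoint_left.1 d1) huS h)] at huα
            exact absurd huα (Set.notMem_empty e)
          · exact huS
        exact absurd (hαE' u huS' e huα) (fun h => d2.ne_of_mem he h rfl)
    · obtain ⟨t, ⟨htS, htα⟩, huniq⟩ := h4' e he
      refine ⟨t, ⟨Or.inr htS, ⟨Or.inr htα, heD⟩⟩, ?_⟩
      rintro u ⟨huS, huα, -⟩
      rcases huα with huα | huα
      · have huS' : u ∈ M.S := by
          rcases huS with huS | huS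
          · exact huS
          · rw [h2 u (fun h => (Set.disjoint_left.1 d1) h huS)] at huα
            exact absurd huα (Set.notMem_empty e)
        exact absurd (hαE u huS' e huα) (fun h => d2.ne_of_mem h he rfl)
      · rcases huS with huS | huS
        · rw [h2' u (fun h => (Set.disjoint_left.1 d1) huS h)] at huα
          exact absurd huα (Set.notMem_empty e)
        · exact huniq u ⟨huS, huα⟩
  · intro u hu
    simp only [nonRecWire, Set.mem_union, not_or] at hu
    funext x
    simp [nonRecWire, hu.1, hu.2]
  · intro u hu x y hxy
    simp only [nonRecWire] at hxy ⊢
    by_cases huM : u ∈ M.S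
    · simp only [if_pos huM]
      refine h6 u huM x y ?_
      intro v hv
      rcases hv with hv | hv
      · exact hxy v (Or.inl (Or.inl hv))
      · refine hxy v (Or.inr ⟨Or.inl hv, ?_⟩)
        have : ω v = none := by
          cases hωv : ω v with
          | none => rfl
          | some t => exact absurd (hαE u huM v hv) (fun h => d2.ne_of_mem h (hω v t hωv).1 rfl)
        simp [this]
    · have huM' : u ∈ M'.S := by
        rcases hu with hu | hu
        · exact absurd hu huM
        · exact hu
      simp only [if_neg huM, if_pos huM']
      refine h6' u huM' _ _ ?_
      intro v hv
      rcases hv with hv | hv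
      · have hωv : ω v = none := hωS v (Or.inr hv)
        simp only [subst, hωv, Option.elim]
        exact hxy v (Or.inl (Or.inr hv))
      · cases hωv : ω v with
        | none =>
          simp only [subst, hωv, Option.elim]
          exact hxy v (Or.inr ⟨Or.inr hv, by simp [hωv]⟩)
        | some t =>
          simp only [subst, hωv, Option.elim]
          exact hxy t (Or.inl (Or.inl (hω v t hωv).2))

end BANModule
namespace BANModule

variable {U : Type}

lemma closure_subset {A : Set (BANModule U)}
    (hA : ∀ N ∈ A, N.Valid ∧ N.S.Finite ∧ N.E.Finite) {M : BANModule U}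
    (hM : InClosure A M) : M.Valid ∧ M.S.Finite ∧ M.E.Finite := by
  induction hM with
  | base h => exact hA _ h
  | recw ω hM ih =>
    rw [recWireOp]
    split_ifs with h
    · exact ⟨recWire_valid ih.1 h, ih.2.1, ih.2.2.subset Set.diff_subset⟩
    · exact ⟨valid_empty, Set.finite_empty, Set.finite_empty⟩
  | nonrecw ω hM hM' ih ih' =>
    rw [nonRecWireOp]
    split_ifs with h
    · exact ⟨nonRecWire_valid ih.1 ih'.1 h, ih.2.1.union ih'.2.1,
        ((ih.2.2.union ih'.2.2).subset Set.diff_subset)⟩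
    · exact ⟨valid_empty, Set.finite_empty, Set.finite_empty⟩

lemma empty_mem_closure [Infinite U] :
    InClosure {N : BANModule U | N.Valid ∧ N.E.Finite ∧ ∃ s, N.S = {s}}
      (emptyModule U) := by
  obtain ⟨s⟩ : Nonempty U := inferInstance
  set M0 : BANModule U :=
    ⟨{s}, ∅, fun _ => ∅, fun _ _ => false⟩ with hM0
  have hbase : InClosure {N : BANModule U | N.Valid ∧ N.E.Finite ∧ ∃ s, N.S = {s}} M0 := by
    refine InClosure.base ⟨⟨?_, ?_, ?_, ?_, ?_, ?_⟩, Set.finite_empty, s, rfl⟩ <;>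
      simp [hM0]
  have hnot : ¬ M0.RecWiring (fun _ => some s) := by
    intro h
    exact Set.notMem_empty s (h s s rfl).1
  have := InClosure.recw (fun _ => some s) hbase
  rwa [recWireOp, if_neg hnot] at this
lemma eq_empty {M : BANModule U} (hV : M.Valid) (h : M.S = ∅) : M = emptyModule U := by
  obtain ⟨h1, h2, h3, h4, h5, h6⟩ := hV
  have hE : M.E = ∅ := by
    ext e
    simp only [Set.mem_empty_iff_false, iff_false]
    intro he
    obtain ⟨t, ⟨htS, -⟩, -⟩ := h4 e he
    rw [h] at htS
    exact htS
  have hα : M.α = fun _ => ∅ := by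
    funext u
    exact h2 u (by rw [h]; exact Set.notMem_empty u)
  have hf : M.f = fun _ _ => false := by
    funext u
    exact h5 u (by rw [h]; exact Set.notMem_empty u)
  cases M
  simp only [emptyModule, mk.injEq]
  exact ⟨h, hE, hα, hf⟩

lemma mem_closure_of_valid [Infinite U] (n : ℕ) :
    ∀ M : BANModule U, M.Valid → M.S.Finite → M.E.Finite → M.S.ncard ≤ n →
    InClosure {N : BANModule U | N.Valid ∧ N.E.Finite ∧ ∃ s, N.S = {s}} M := by
  induction n with
  | zero =>
    intro M hV hS hE hcard
    have h0 : M.S = ∅ := (Set.ncard_eq_zero hS).1 (Nat.le_zero.1 hcard)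
    rw [eq_empty hV h0]
    exact empty_mem_closure
  | succ n ih =>
    intro M hV hS hE hcard
    by_cases hSe : M.S = ∅
    · rw [eq_empty hV hSe]
      exact empty_mem_closure
    obtain ⟨s, hs⟩ := Set.nonempty_iff_ne_empty.2 hSe
    by_cases hsingle : M.S = {s}
    · exact InClosure.base ⟨hV, hE, s, hsingle⟩
    -- the interesting case: decompose `M` into a size-one module and the rest
    obtain ⟨h1, h2, h3, h4, h5, h6⟩ := hV
    have hF : (M.S ∪ M.E).Finite := hS.union hE
    have hinf : (M.S ∪ M.E)ᶜ.Infinite := hF.infinite_compl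
    set g : ℕ ↪ ((M.S ∪ M.E)ᶜ : Set U) := hinf.natEmbedding with hg
    obtain ⟨idx, hidx⟩ := Set.countable_iff_exists_injOn.1 (hS.diff (t := {s})).countable
    set S2 : Set U := M.S \ {s} with hS2
    set c : U → U := fun u => (g (2 * idx u) : U) with hc
    set d : U → U := fun u => (g (2 * idx u + 1) : U) with hd
    set cI : Set U := c '' S2 with hcI
    set dI : Set U := d '' S2 with hdI
    -- basic freshness facts
    have hgF : ∀ m : ℕ, (g m : U) ∉ M.S ∪ M.E := fun m => (g m).2
    have hcF : ∀ t, c t ∉ M.S ∪ M.E := fun t => hgF _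
    have hdF : ∀ t, d t ∉ M.S ∪ M.E := fun t => hgF _
    have hcIF : ∀ u ∈ cI, u ∉ M.S ∪ M.E := by
      rintro u ⟨t, -, rfl⟩; exact hcF t
    have hdIF : ∀ u ∈ dI, u ∉ M.S ∪ M.E := by
      rintro u ⟨t, -, rfl⟩; exact hdF t
    have hcinj : Set.InjOn c S2 := by
      intro a ha b hb hab
      have := g.injective (Subtype.coe_injective hab)
      exact hidx ha hb (by omega)
    have hdinj : Set.InjOn d S2 := by
      intro a ha b hb hab
      have := g.injective (Subtype.coe_injective hab)
      exact hidx ha hb (by omega)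
    have hcd : ∀ a b : U, c a ≠ d b := by
      intro a b hab
      have := g.injective (Subtype.coe_injective hab)
      omega
    have hcIdI : ∀ u, u ∈ cI → u ∈ dI → False := by
      rintro u ⟨a, -, rfl⟩ ⟨b, -, hb⟩
      exact hcd a b hb.symm
    have hαE : ∀ t ∈ M.S, ∀ e ∈ M.α t, e ∈ M.E := fun t ht e he => h3 t ht he
    have hsE : s ∉ M.E := fun h => h1.ne_of_mem hs h rfl
    -- the size-one module keeping only `s`
    set M1 : BANModule U :=
      ⟨{s}, M.α s ∪ cI, fun u => if u = s then M.α s ∪ cI else ∅,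
        fun u x => if u = s then
          M.f s (fun v => if v ∈ S2 then x (c v) else x v) else false⟩ with hM1
    -- the module of size `|S| - 1` keeping everything else
    set M2 : BANModule U :=
      ⟨S2, (M.E \ M.α s) ∪ dI, fun t => if t ∈ S2 then M.α t ∪ {d t} else ∅,
        fun t x => if t ∈ S2 then
          M.f t (fun v => if v = s then x (d t) else x v) else false⟩ with hM2
    set ω : U → Option U := fun u => if u ∈ dI then some s else none with hω
    set ω' : U → Option U :=
      fun u => if h : u ∈ cI then some h.choose else none with hω'
    have hω'c : ∀ t ∈ S2, ω' (c t) = some t := by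
      intro t ht
      have h : c t ∈ cI := Set.mem_image_of_mem c ht
      have hch := h.choose_spec
      rw [hω']
      simp only [dif_pos h]
      exact congrArg some (hcinj hch.1 ht hch.2)
    have hω'none : ∀ u, u ∉ cI → ω' u = none := by
      intro u hu; rw [hω']; simp only [dif_neg hu]
    have hωd : ∀ u ∈ dI, ω u = some s := by
      intro u hu; rw [hω]; simp only [if_pos hu]
    have hωnone : ∀ u, u ∉ dI → ω u = none := by
      intro u hu; rw [hω]; simp only [if_neg hu]
    have hV1 : M1.Valid := by
      have hsα : s ∉ M.α s := fun h => hsE (h3 s hs h)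
      have hscI : s ∉ cI := fun h => hcIF s h (Or.inl hs)
      refine ⟨?_, ?_, ?_, ?_, ?_, ?_⟩
      · rw [Set.disjoint_left]
        intro u hu h
        rw [Set.mem_singleton_iff] at hu
        rcases h with h | h
        · exact hsα (hu ▸ h)
        · exact hscI (hu ▸ h)
      · intro u hu
        rw [Set.mem_singleton_iff] at hu
        simp only [hM1, if_neg hu]
      · intro u hu
        rw [Set.mem_singleton_iff] at hu
        simp only [hM1, if_pos hu]
        exact subset_rfl
      · intro e he
        refine ⟨s, ⟨rfl, by simp only [hM1, if_pos rfl]; exact he⟩, ?_⟩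
        rintro u ⟨hu, -⟩
        exact hu
      · intro u hu
        rw [Set.mem_singleton_iff] at hu
        funext x
        simp only [hM1, if_neg hu]
      · intro u hu x y hxy
        rw [Set.mem_singleton_iff] at hu
        simp only [hM1, if_pos hu]
        refine h6 s hs _ _ ?_
        intro v hv
        rcases hv with hv | hv
        · by_cases hv2 : v ∈ S2
          · simp only [if_pos hv2]
            refine hxy (c v) (Or.inr ?_)
            simp only [hM1, if_pos hu]
            exact Or.inr (Set.mem_image_of_mem c hv2)
          · simp only [if_neg hv2]
            have hvs : v = s := by
              by_contra hvs
              exact hv2 ⟨hv, hvs⟩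
            rw [hvs]
            exact hxy s (Or.inl rfl)
        · have hv2 : v ∉ S2 := fun h => h1.ne_of_mem h.1 (h3 s hs hv) rfl
          simp only [if_neg hv2]
          refine hxy v (Or.inr ?_)
          simp only [hM1, if_pos hu]
          exact Or.inl hv
    have hV2 : M2.Valid := by
      have hdS : ∀ t, d t ∉ M.S := fun t h => hdF t (Or.inl h)
      have hdE : ∀ t, d t ∉ M.E := fun t h => hdF t (Or.inr h)
      have hαdisj : ∀ t ∈ S2, ∀ e ∈ M.α t, e ∉ M.α s := by
        intro t ht e he hes
        obtain ⟨u, -, huniq⟩ := h4 e (h3 t ht.1 he)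
        exact ht.2 ((huniq t ⟨ht.1, he⟩).trans (huniq s ⟨hs, hes⟩).symm)
      refine ⟨?_, ?_, ?_, ?_, ?_, ?_⟩
      · rw [Set.disjoint_left]
        intro u hu h
        rcases h with h | h
        · exact h1.ne_of_mem hu.1 h.1 rfl
        · exact hdIF u h (Or.inl hu.1)
      · intro u hu
        simp only [hM2, if_neg (show u ∉ S2 from hu)]
      · intro t ht
        simp only [hM2, if_pos (show t ∈ S2 from ht)]
        rintro e (he | he)
        · exact Or.inl ⟨h3 t ht.1 he, hαdisj t ht e he⟩
        · rw [Set.mem_singleton_iff] at he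
          exact Or.inr (he ▸ Set.mem_image_of_mem d ht)
      · rintro e (he | he)
        · obtain ⟨t, ⟨htS, htα⟩, huniq⟩ := h4 e he.1
          have ht2 : t ∈ S2 := ⟨htS, fun h => he.2 (h ▸ htα)⟩
          refine ⟨t, ⟨ht2, by simp only [hM2, if_pos ht2]; exact Or.inl htα⟩, ?_⟩
          rintro u ⟨hu, huα⟩
          simp only [hM2, if_pos (show u ∈ S2 from hu)] at huα
          rcases huα with huα | huα
          · exact huniq u ⟨hu.1, huα⟩
          · rw [Set.mem_singleton_iff] at huα
            exact absurd (huα ▸ he.1) (hdE u)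
        · obtain ⟨t, ht2, rfl⟩ := he
          refine ⟨t, ⟨ht2, by simp only [hM2, if_pos ht2]; exact Or.inr rfl⟩, ?_⟩
          rintro u ⟨hu, huα⟩
          simp only [hM2, if_pos (show u ∈ S2 from hu)] at huα
          rcases huα with huα | huα
          · exact absurd (h3 u hu.1 huα) (hdE t)
          · rw [Set.mem_singleton_iff] at huα
            exact hdinj hu ht2 huα.symm
      · intro u hu
        funext x
        simp only [hM2, if_neg (show u ∉ S2 from hu)]
      · intro t ht x y hxy
        simp only [hM2, if_pos (show t ∈ S2 from ht)]
        refine h6 t ht.1 _ _ ?_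
        intro v hv
        rcases hv with hv | hv
        · by_cases hvs : v = s
          · simp only [if_pos hvs]
            refine hxy (d t) (Or.inr ?_)
            simp only [hM2, if_pos (show t ∈ S2 from ht)]
            exact Or.inr rfl
          · simp only [if_neg hvs]
            exact hxy v (Or.inl ⟨hv, hvs⟩)
        · have hvs : v ≠ s := fun h => h1.ne_of_mem hs (h3 t ht.1 (h ▸ hv)) rfl
          simp only [if_neg hvs]
          refine hxy v (Or.inr ?_)
          simp only [hM2, if_pos (show t ∈ S2 from ht)]
          exact Or.inl hv
    have hNRW : M1.NonRecWiring M2 ω := by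
      refine ⟨?_, ?_, ?_, ?_, ?_⟩
      · rw [Set.disjoint_left]
        intro u hu h
        rw [Set.mem_singleton_iff] at hu
        exact h.2 hu
      · rw [Set.disjoint_left]
        rintro e (he | he) h
        · rcases h with h | h
          · exact h.2 he
          · exact hdIF e h (Or.inr (h3 s hs he))
        · rcases h with h | h
          · exact hcIF e he (Or.inr h.1)
          · exact hcIdI e he h
      · rw [Set.disjoint_left]
        intro u hu h
        rw [Set.mem_singleton_iff] at hu
        rcases h with h | h
        · exact hsE (hu ▸ h.1)
        · exact hdIF u h (Or.inl (hu ▸ hs))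
      · rw [Set.disjoint_left]
        rintro u hu (h | h)
        · exact h1.ne_of_mem hu.1 (h3 s hs h) rfl
        · exact hcIF u h (Or.inl hu.1)
      · intro e t het
        by_cases h : e ∈ dI
        · rw [hωd e h] at het
          cases het
          exact ⟨Or.inr h, rfl⟩
        · rw [hωnone e h] at het
          cases het
    have hRW : (M1.nonRecWire M2 ω).RecWiring ω' := by
      intro e t het
      by_cases h : e ∈ cI
      · have hee : ω' e = some h.choose := by rw [hω']; exact dif_pos h
        rw [hee] at het
        obtain ⟨hts, hct⟩ := h.choose_spec
        cases het
        constructor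
        · refine ⟨Or.inl (Or.inr (hct ▸ Set.mem_image_of_mem c hts)), ?_⟩
          intro hd
          simp only [Set.mem_setOf_eq, hωnone e (fun hdm => hcIdI e h hdm)] at hd
          exact hd rfl
        · exact Or.inr hts
      · rw [hω'none e h] at het
        cases het
    have hω'some : ∀ u (h : u ∈ cI), ω' u = some h.choose := by
      intro u h
      rw [hω']
      exact dif_pos h
    have hdom : {e | ω e ≠ none} = dI := by
      ext u
      simp only [Set.mem_setOf_eq]
      constructor
      · intro h
        by_contra hu
        exact h (hωnone u hu)
      · intro hu h
        rw [hωd u hu] at h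
        exact Option.some_ne_none _ h
    have hdom' : {e | ω' e ≠ none} = cI := by
      ext u
      simp only [Set.mem_setOf_eq]
      constructor
      · intro h
        by_contra hu
        exact h (hω'none u hu)
      · intro hu h
        rw [hω'some u hu] at h
        exact Option.some_ne_none _ h
    have hscI : s ∉ cI := fun h => hcIF s h (Or.inl hs)
    have hME : M = (M1.nonRecWire M2 ω).recWire ω' := by
      refine BANModule.ext ?_ ?_ ?_ ?_
      · simp only [recWire, nonRecWire, hM1, hM2]
        ext u
        by_cases h : u = s <;> simp [hS2, h, hs]
      · simp only [recWire, nonRecWire, hM1, hM2, hdom, hdom']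
        ext e
        constructor
        · intro he
          have hec : e ∉ cI := fun h => hcIF e h (Or.inr he)
          have hed : e ∉ dI := fun h => hdIF e h (Or.inr he)
          refine ⟨⟨?_, hed⟩, hec⟩
          by_cases h : e ∈ M.α s
          · exact Or.inl (Or.inl h)
          · exact Or.inr (Or.inl ⟨he, h⟩)
        · rintro ⟨⟨he, hed⟩, hec⟩
          rcases he with (h | h) | (h | h)
          · exact h3 s hs h
          · exact absurd h hec
          · exact h.1
          · exact absurd h hed
      · funext u
        simp only [recWire, nonRecWire, hM1, hM2, hdom, hdom']
        by_cases hus : u = s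
        · have hu2 : u ∉ S2 := fun h => h.2 hus
          rw [if_pos hus, if_neg hu2, hus]
          ext e
          constructor
          · intro he
            have heE : e ∈ M.E := h3 s hs he
            exact ⟨⟨Or.inl (Or.inl he), fun h => hdIF e h (Or.inr heE)⟩,
              fun h => hcIF e h (Or.inr heE)⟩
          · rintro ⟨⟨he, hed⟩, hec⟩
            rcases he with (h | h) | h
            · exact h
            · exact absurd h hec
            · exact absurd h (Set.notMem_empty e)
        · by_cases hu2 : u ∈ S2
          · rw [if_neg hus, if_pos hu2]
            ext e
            constructor
            · intro he
              have heE : e ∈ M.E := h3 u hu2.1 he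
              exact ⟨⟨Or.inr (Or.inl he), fun h => hdIF e h (Or.inr heE)⟩,
                fun h => hcIF e h (Or.inr heE)⟩
            · rintro ⟨⟨he, hed⟩, hec⟩
              rcases he with h | (h | h)
              · exact absurd h (Set.notMem_empty e)
              · exact h
              · rw [Set.mem_singleton_iff] at h
                exact absurd (h ▸ Set.mem_image_of_mem d hu2) hed
          · have huS : u ∉ M.S := fun h => hu2 ⟨h, hus⟩
            rw [if_neg hus, if_neg hu2, h2 u huS]
            simp
      · funext u x
        simp only [recWire, nonRecWire, hM1, hM2]
        have hy : ∀ v, v ∉ cI → subst ω' x v = x v := by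
          intro v hv
          simp [subst, hω'none v hv]
        have hyc : ∀ t ∈ S2, subst ω' x (c t) = x t := by
          intro t ht
          simp [subst, hω'c t ht]
        by_cases hus : u = s
        · subst hus
          rw [if_pos (Set.mem_singleton u), if_pos rfl]
          refine h6 u hs _ _ ?_
          intro v hv
          rcases hv with hv | hv
          · by_cases hv2 : v ∈ S2
            · rw [if_pos hv2, hyc v hv2]
            · rw [if_neg hv2]
              have hvs : v = u := by
                by_contra h
                exact hv2 ⟨hv, h⟩
              rw [hvs, hy u hscI]
          · have hv2 : v ∉ S2 := fun h => h1.ne_of_mem h.1 (h3 u hs hv) rfl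
            have hvc : v ∉ cI := fun h => hcIF v h (Or.inr (h3 u hs hv))
            rw [if_neg hv2, hy v hvc]
        · have hu1 : u ∉ ({s} : Set U) := hus
          rw [if_neg hu1]
          by_cases hu2 : u ∈ S2
          · rw [if_pos hu2, if_pos hu2]
            have hdu : subst ω (subst ω' x) (d u) = x s := by
              have hh : ω (d u) = some s := hωd (d u) (Set.mem_image_of_mem d hu2)
              simp only [subst, hh, Option.elim]
              exact hy s hscI
            refine h6 u hu2.1 _ _ ?_
            intro v hv
            have hvE : v ∈ M.S ∪ M.E := by
              rcases hv with hv | hv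
              · exact Or.inl hv
              · exact Or.inr (h3 u hu2.1 hv)
            by_cases hvs : v = s
            · rw [if_pos hvs, hdu, hvs]
            · rw [if_neg hvs]
              have hvd : v ∉ dI := fun h => hdIF v h hvE
              have hvc : v ∉ cI := fun h => hcIF v h hvE
              rw [subst, hωnone v hvd, Option.elim, hy v hvc]
          · have huS : u ∉ M.S := fun h => hu2 ⟨h, hus⟩
            rw [if_neg hu2, h5 u huS]
    have hM2cl : InClosure {N : BANModule U | N.Valid ∧ N.E.Finite ∧ ∃ s, N.S = {s}} M2 := by
      refine ih M2 hV2 (hS.diff (t := {s})) (((hE.diff (t := _)).union ((hS.diff (t := {s})).image d))) ?_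
      have h1le : 0 < M.S.ncard := (Set.ncard_pos hS).2 ⟨s, hs⟩
      have h2card : S2.ncard = M.S.ncard - 1 := by
        rw [hS2]; exact Set.ncard_diff_singleton_of_mem hs
      simp only [hM2]
      omega
    have hM1cl : InClosure {N : BANModule U | N.Valid ∧ N.E.Finite ∧ ∃ s, N.S = {s}} M1 :=
      InClosure.base ⟨hV1, (hE.subset (h3 s hs)).union ((hS.diff (t := {s})).image c), s, rfl⟩
    have hfinal := InClosure.recw ω' (InClosure.nonrecw ω hM1cl hM2cl)
    rw [nonRecWireOp, if_pos hNRW, recWireOp, if_pos hRW] at hfinal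
    rwa [hME]
end BANModule

/-- The set `𝓜` of all modules equals the closure of the set
`𝓜₁` of all modules of size 1 under the set of all recursive and non-recursive
wiring operators: `𝓜 = (𝓜₁)‾^ω`.  (Names are drawn from an infinite name
space `U`, and modules are finite.) -/
theorem allModules_eq_closure_size_one (U : Type) [Infinite U] :
    {M : BANModule U | M.Valid ∧ M.S.Finite ∧ M.E.Finite} =
    {M : BANModule U |
      BANModule.InClosure
        {N : BANModule U | N.Valid ∧ N.E.Finite ∧ ∃ s, N.S = {s}} M} := by
  ext M
  simp only [Set.mem_setOf_eq]
  constructor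
  · rintro ⟨hV, hS, hE⟩
    exact BANModule.mem_closure_of_valid M.S.ncard M hV hS hE le_rfl
  · intro h
    refine BANModule.closure_subset ?_ h
    rintro N ⟨hV, hE, s, hs⟩
    exact ⟨hV, hs ▸ Set.finite_singleton s, hE⟩
end

section
/- For every BAN F over a finite set S, there exists a BAN F' such that F' simulates F and every local function of F' is monotone (with respect to the pointwise order on configurations, where false < true). -/
open Classical

/-!
Boolean automata networks (BANs) and simulation, after Perrot, Perrotin, Sené,
"A framework for (de)composing with Boolean automata networks".
Statement 7: every BAN over a finite set is simulated by a BAN all of whose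
local functions are monotone.
-/

/-- The update of the BAN `F` by the update `δ`: automata in `δ` take the value
of their local function, the others keep their value. -/
noncomputable def banStep {A : Type} (F : A → (A → Bool) → Bool) (δ : Set A)
    (x : A → Bool) : A → Bool :=
  fun s => if s ∈ δ then F s x else x s

/-- The execution of the BAN `F` from `x` under the finite update mode `Δ`. -/
noncomputable def banExec {A : Type} (F : A → (A → Bool) → Bool)
    (Δ : List (Set A)) (x : A → Bool) : A → Bool :=
  Δ.foldl (fun y δ => banStep F δ y) x

/-- The BAN `F` over `A` simulates the BAN `F'` over `B`: there is a global
encoding `Φ` (with `•` encoded by `none`), surjective onto the configurations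
of `B`, such that every update of `F'` is matched, on encodings, by the
execution of some finite update mode of `F`. -/
noncomputable def Simulates {A B : Type} (F : A → (A → Bool) → Bool)
    (F' : B → (B → Bool) → Bool) : Prop :=
  ∃ Φ : (A → Bool) → Option (B → Bool),
    (∀ x' : B → Bool, ∃ x : A → Bool, Φ x = some x') ∧
    ∀ (x : A → Bool) (x' : B → Bool), Φ x = some x' →
      ∀ δ' : Set B, ∃ Δ : List (Set A),
        Φ (banExec F Δ x) = some (banStep F' δ' x')
/-- `g` is monotone with respect to the pointwise order on configurations
(where `false < true`). -/
def IsMonotoneBF {V : Type} (g : (V → Bool) → Bool) : Prop :=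
  ∀ x y : V → Bool, (∀ v, x v ≤ y v) → g x ≤ g y

/-- For every BAN `F` over a finite set `S`, there exists a BAN
`F'` such that `F'` simulates `F` and every local function of `F'` is
monotone. -/
theorem exists_simulating_ban_monotone (S : Type) [Fintype S]
    (F : S → (S → Bool) → Bool) :
    ∃ (S' : Type) (F' : S' → (S' → Bool) → Bool),
      Simulates F' F ∧ ∀ s' : S', IsMonotoneBF (F' s') := by
  classical
  -- duplicate automata: (s, true) holds x s, (s, false) holds ¬ x s
  refine ⟨S × Bool,
    fun p y => if (∃ x : S → Bool,
        (∀ s, cond (x s) (y (s, true)) (y (s, false)) = true) ∧ F p.1 x = p.2)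
      then true else false, ?_, ?_⟩
  · -- simulation
    refine ⟨fun y => if (∀ s, y (s, false) = ! y (s, true))
      then some (fun s => y (s, true)) else none, ?_, ?_⟩
    · intro x'
      refine ⟨fun p => cond p.2 (x' p.1) (! x' p.1), ?_⟩
      simp
    · intro y x hΦ δ'
      have hy : ∀ s, y (s, false) = ! y (s, true) := by
        by_contra h
        simp [h] at hΦ
      have hx : ∀ s, y (s, true) = x s := by
        have hΦ' : (if (∀ s, y (s, false) = ! y (s, true))
            then some (fun s => y (s, true)) else none) = some x := hΦ
        rw [if_pos hy] at hΦ'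
        exact fun s => congrFun (Option.some.inj hΦ') s
      refine ⟨[{p | p.1 ∈ δ'}], ?_⟩
      -- value of the local functions at an encoding
      have key : ∀ (p : S × Bool),
          (if (∃ x' : S → Bool,
              (∀ s, cond (x' s) (y (s, true)) (y (s, false)) = true) ∧ F p.1 x' = p.2)
            then true else false) = decide (F p.1 x = p.2) := by
        intro p
        by_cases h : F p.1 x = p.2
        · rw [if_pos, decide_eq_true h]
          refine ⟨x, fun s => ?_, h⟩
          rw [hx, hy, hx]
          cases hxs : x s <;> simp [hxs]
        · rw [if_neg, decide_eq_false h]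
          rintro ⟨x', hc, hFx⟩
          have : x' = x := by
            funext s
            have := hc s
            rw [hx, hy, hx] at this
            cases hxs : x' s <;> rw [hxs] at this <;> simp at this <;> simp [this]
          rw [this] at hFx
          exact h hFx
      have hnew : ∀ p : S × Bool,
          banExec (fun p y => if (∃ x : S → Bool,
              (∀ s, cond (x s) (y (s, true)) (y (s, false)) = true) ∧ F p.1 x = p.2)
            then true else false) [{p | p.1 ∈ δ'}] y p
          = if p.1 ∈ δ' then decide (F p.1 x = p.2) else y p := by
        intro p
        simp only [banExec, List.foldl, banStep, Set.mem_setOf_eq]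
        by_cases hp : p.1 ∈ δ'
        · rw [if_pos hp, if_pos hp, key]
        · rw [if_neg hp, if_neg hp]
      dsimp only
      rw [if_pos, Option.some.injEq]
      · funext s
        rw [hnew, banStep]
        by_cases hs : s ∈ δ'
        · simp [hs]
        · simp [hs, hx]
      · intro s
        rw [hnew, hnew]
        by_cases hs : s ∈ δ'
        · simp only [hs, if_true]
          cases hF : F s x <;> simp
        · simp [hs, hy]
  · -- monotonicity
    intro p y z hyz
    dsimp only
    by_cases hz : (∃ x : S → Bool,
        (∀ s, cond (x s) (z (s, true)) (z (s, false)) = true) ∧ F p.1 x = p.2)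
    · rw [if_pos hz]; exact Bool.le_true _
    · rw [if_neg hz, if_neg]
      rintro ⟨x, hc, hFx⟩
      refine hz ⟨x, fun s => ?_, hFx⟩
      have h1 := hc s
      cases hxs : x s <;> rw [hxs] at h1 <;> simp at h1 ⊢
      · have := hyz (s, false); rw [h1] at this
        revert this; cases z (s, false) <;> simp
      · have := hyz (s, true); rw [h1] at this
        revert this; cases z (s, true) <;> simp
end

section
/- Let F be a BAN over S, and for each a ∈ S let M_a be a module over (T_a, E_a, α_a) (T_a's and E_a's pairwise disjoint) with interfaces I_{b,a} as in the simulation setup, and let M = ∘_ω (⋃_{a ∈ S} M_a) with ω = ⋃_{a ≠ b} I_{a,b}, so that M is a BAN over T = ⋃_{a ∈ S} T_a. Then for every a ∈ S, every input-first update mode Δ over T_a, every update mode Δ' over T ∖ T_a of the same length, and every configuration x : T → Bool, the restriction of the execution of M satisfies M_{Δ ∪ Δ'}(x)|_{T_a} = (M_a)_Δ(x|_{T_a} ⊔ (x ∘ ⨆_b I_{b,a})), where Δ ∪ Δ' is the componentwise union of the two update modes. -/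
open Classical

namespace BANModule

variable {U : Type}

/-- A finite update mode `Δ` over the module `M` (a sequence of updates, each a
set of automata of `M`) is input-first if no automaton with input(s) is updated
later than the first update. -/
def InputFirst (M : BANModule U) (Δ : List (Set U)) : Prop :=
  (∀ δ ∈ Δ, δ ⊆ M.S) ∧ ∀ δ ∈ Δ.tail, ∀ s ∈ δ, M.α s = ∅

end BANModule

/-- Let `F` be a BAN over `S`, and for each `a ∈ S` let `M_a`
be a module over `(T_a, E_a, α_a)` (`T_a`'s and `E_a`'s pairwise disjoint) with
interfaces `I_{b,a}` as in the simulation setup, and let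
`M = ∘_ω (⋃_{a ∈ S} M_a)` with `ω = ⋃_{a ≠ b} I_{a,b}`, so that `M` is a BAN
over `T = ⋃_{a ∈ S} T_a`.  Then for every `a ∈ S`, every input-first update
mode `Δ` over `T_a`, every update mode `Δ'` over `T ∖ T_a` of the same length,
and every configuration `x : T → Bool`, the restriction of the execution of `M`
satisfies `M_{Δ ∪ Δ'}(x)|_{T_a} = (M_a)_Δ(x|_{T_a} ⊔ (x ∘ ⨆_b I_{b,a}))`,
where `Δ ∪ Δ'` is the componentwise union of the two update modes (here
`x|_{T_a} ⊔ (x ∘ ⨆_b I_{b,a})` is the configuration `subst ω x`, which agrees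
with `x` on `T_a` and reads each input `e ∈ E_a` as `x (I_{b,a}(e))`). -/
theorem wired_exec_restrict (U S : Type)
    (F : S → (S → Bool) → Bool)
    (T Ein : S → Set U)
    (Ma : S → BANModule U)
    (hMaS : ∀ a, (Ma a).S = T a)
    (hMaE : ∀ a, (Ma a).E = Ein a)
    (hValid : ∀ a, (Ma a).Valid)
    (hTdisj : Pairwise fun a b => Disjoint (T a) (T b))
    (hEdisj : Pairwise fun a b => Disjoint (Ein a) (Ein b))
    (hTEdisj : ∀ a b, Disjoint (T a) (Ein b))
    -- communication sets
    (Usets : S → S → Set U)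
    (hUsub : ∀ a b, a ≠ b → Usets a b ⊆ T a)
    (hUself : ∀ a, Usets a a = ∅)
    -- interfaces: `I a b` is a partial map from `E_b` onto `U_{a,b}`
    (I : S → S → U → Option U)
    (hIself : ∀ a e, I a a e = none)
    (hIdom : ∀ a b e t, I a b e = some t → e ∈ Ein b ∧ t ∈ Usets a b)
    (hIsurj : ∀ a b, a ≠ b → ∀ t ∈ Usets a b, ∃ e, I a b e = some t)
    -- `⨆_a I_{a,b}` is a total map from `E_b` to `⋃_a U_{a,b}`
    (hItot : ∀ b, ∀ e ∈ Ein b, ∃! a, ∃ t, I a b e = some t)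
    -- `ω` is the union `⋃_{a ≠ b} I_{a,b}` of the interfaces
    (ω : U → Option U)
    (hω : ∀ e t, ω e = some t ↔ ∃ b a, I a b e = some t) :
    ∀ a : S, ∀ Δ : List (Set U), (Ma a).InputFirst Δ →
      ∀ Δ' : List (Set U),
        (∀ δ ∈ Δ', δ ⊆ (⋃ b, T b) \ T a) →
        Δ'.length = Δ.length →
        ∀ x : U → Bool, ∀ u ∈ T a,
          banExec (BANModule.recWire (BANModule.famUnion Ma) ω).f
              (List.zipWith (· ∪ ·) Δ Δ') x u
            = banExec (Ma a).f Δ (BANModule.subst ω x) u := by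
  intro a
  -- ω is none on states
  have hωnone : ∀ u ∈ T a, ω u = none := by
    intro u hu
    cases hωu : ω u with
    | none => rfl
    | some t =>
      obtain ⟨b, c, hI⟩ := (hω u t).mp hωu
      have he := (hIdom c b u t hI).1
      exact absurd hu (fun hu => (hTEdisj a b).ne_of_mem hu he rfl)
  have hsubst : ∀ y : U → Bool, ∀ u ∈ T a, BANModule.subst ω y u = y u := by
    intro y u hu
    simp [BANModule.subst, hωnone u hu]
  -- famUnion's local function at states of T a
  have hfam : ∀ u ∈ T a, ∀ y : U → Bool,
      (BANModule.famUnion Ma).f u y = (Ma a).f u y := by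
    intro u hu y
    have hex : ∃ p, u ∈ (Ma p).S := ⟨a, (hMaS a).symm ▸ hu⟩
    have hch : hex.choose = a := by
      by_contra hne
      have := hex.choose_spec
      rw [hMaS] at this
      exact (hTdisj hne).ne_of_mem this hu rfl
    simp only [BANModule.famUnion, dif_pos hex, hch]
  have hrec : ∀ u ∈ T a, ∀ y : U → Bool,
      (BANModule.recWire (BANModule.famUnion Ma) ω).f u y
        = (Ma a).f u (BANModule.subst ω y) := by
    intro u hu y
    simp only [BANModule.recWire]
    exact hfam u hu _
  have hdep := (hValid a).2.2.2.2.2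
  -- tail lemma: once configs agree on T a and all updated automata are input-free
  have tail : ∀ Δ : List (Set U),
      (∀ δ ∈ Δ, δ ⊆ T a) → (∀ δ ∈ Δ, ∀ s ∈ δ, (Ma a).α s = ∅) →
      ∀ Δ' : List (Set U), (∀ δ ∈ Δ', ∀ s ∈ δ, s ∉ T a) →
      Δ'.length = Δ.length →
      ∀ y z : U → Bool, (∀ u ∈ T a, y u = z u) →
      ∀ u ∈ T a,
        banExec (BANModule.recWire (BANModule.famUnion Ma) ω).f
            (List.zipWith (· ∪ ·) Δ Δ') y u
          = banExec (Ma a).f Δ z u := by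
    intro Δ
    induction Δ with
    | nil =>
      intro _ _ Δ' _ hlen y z hyz u hu
      rw [List.length_eq_zero_iff.mp hlen]
      exact hyz u hu
    | cons δ Δt ih =>
      intro hsub hαe Δ' hΔ' hlen y z hyz u hu
      cases Δ' with
      | nil => simp at hlen
      | cons δ' Δ't =>
        simp only [List.zipWith_cons_cons, banExec, List.foldl_cons]
        refine ih (fun d hd => hsub d (List.mem_cons_of_mem _ hd))
          (fun d hd => hαe d (List.mem_cons_of_mem _ hd))
          Δ't (fun d hd => hΔ' d (List.mem_cons_of_mem _ hd))
          (by simpa using hlen) _ _ ?_ u hu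
        intro v hv
        simp only [banStep]
        have hvδ' : v ∉ δ' := fun h => hΔ' δ' List.mem_cons_self v h hv
        by_cases hvδ : v ∈ δ
        · rw [if_pos (Set.mem_union_left _ hvδ), if_pos hvδ]
          rw [hrec v hv]
          refine hdep v ((hMaS a).symm ▸ hv) _ _ ?_
          intro w hw
          rw [hαe δ List.mem_cons_self v hvδ] at hw
          have hwT : w ∈ T a := by
            simpa [hMaS] using hw
          rw [hsubst y w hwT]
          exact hyz w hwT
        · rw [if_neg (by simp [hvδ, hvδ']), if_neg hvδ]
          exact hyz v hv
  -- main statement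
  intro Δ hIF Δ' hΔ' hlen x u hu
  cases Δ with
  | nil =>
    rw [List.length_eq_zero_iff.mp hlen]
    simp only [banExec, List.zipWith_nil_right, List.foldl_nil]
    exact (hsubst x u hu).symm
  | cons δ Δt =>
    cases Δ' with
    | nil => simp at hlen
    | cons δ' Δ't =>
      simp only [List.zipWith_cons_cons, banExec, List.foldl_cons]
      refine tail Δt (fun d hd => (hMaS a) ▸ hIF.1 d (List.mem_cons_of_mem _ hd))
        (fun d hd => hIF.2 d hd)
        Δ't (fun d hd s hs => ((hΔ' d (List.mem_cons_of_mem _ hd)) hs).2)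
        (by simpa using hlen) _ _ ?_ u hu
      intro v hv
      simp only [banStep]
      have hvδ' : v ∉ δ' := fun h => ((hΔ' δ' List.mem_cons_self) h).2 hv
      by_cases hvδ : v ∈ δ
      · rw [if_pos (Set.mem_union_left _ hvδ), if_pos hvδ]
        exact hrec v hv x
      · rw [if_neg (by simp [hvδ, hvδ']), if_neg hvδ]
        exact (hsubst x v hv).symm
end

section
/- Let f : (S → Bool) → Bool be written in conjunctive normal form as f(x) = ⋀_{c ∈ C} c(x), where each c ∈ C is a disjunctive clause. Consider the network over T = {u_c | c ∈ C} ∪ {r} in which, given a configuration x : S → Bool fed via external inputs (with the input literal for each variable inverted) and an internal state y : T → Bool with y(r) = ¬x(a) for the self-variable a, the node u_c computes the clause c on the negated inputs and on ¬y(r), and the node r computes ⋁_{c ∈ C} ¬y(u_c). Then after first updating all nodes u_c in parallel and then updating r, the state of r equals ¬f(x). Consequently, reading the output as the negation of r, this module locally simulates f in an input-first way, and all its local functions are disjunctive clauses. -/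
/-!
After Perrot, Perrotin, Sené, "A framework for (de)composing with Boolean
automata networks".  Statement 10: the local module with one automaton `u_c`
per clause of a CNF of `f` and one result automaton `r` locally simulates `f`
in an input-first way (reading the output as the negation of `r`), and all of
its local functions are disjunctive clauses.

The automata set is `T = C ⊕ Unit` (`Sum.inl c` is `u_c`, `Sum.inr ()` is `r`)
and there is one external input line per variable of `S` (carrying, in a
simulation, the negation of the corresponding variable); a configuration of
the module together with its inputs is a function `(C ⊕ Unit) ⊕ S → Bool`
(states on the left, input lines on the right).
-/

/-- `g` is a disjunctive clause: a disjunction of literals, each literal being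
a variable or a negated variable. -/
def IsDisjClause {V : Type} (g : (V → Bool) → Bool) : Prop :=
  ∃ P N : Set V, Disjoint P N ∧
    ∀ x : V → Bool,
      (g x = true ↔ (∃ v ∈ P, x v = true) ∨ (∃ v ∈ N, x v = false))

/-- The local functions of the clause module for a function over `S` with
self-variable `a` and clauses `clause c`, `c : C`: the node `u_c` computes the
clause `c` on the negated input lines and on the negation of the state of `r`
(used for the self-variable `a`), and the node `r` computes `⋁_c ¬ u_c`. -/
def clauseModule {S C : Type} [DecidableEq S] [Fintype C]
    (clause : C → (S → Bool) → Bool) (a : S) :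
    C ⊕ Unit → ((C ⊕ Unit) ⊕ S → Bool) → Bool
  | Sum.inl c => fun z =>
      clause c (fun s => if s = a then !z (Sum.inl (Sum.inr ())) else !z (Sum.inr s))
  | Sum.inr _ => fun z => decide (∃ c : C, z (Sum.inl (Sum.inl c)) = false)

/-- Let `f : (S → Bool) → Bool` be written in conjunctive
normal form as `f(x) = ⋀_{c ∈ C} c(x)`, where each `c ∈ C` is a disjunctive
clause.  In the network over `T = {u_c | c ∈ C} ∪ {r}` described above, for
every configuration `x : S → Bool` fed (negated) via the external inputs and
every internal state `y` with `y(r) = ¬x(a)` for the self-variable `a`, after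
first updating all nodes `u_c` in parallel and then updating `r`, the state of
`r` equals `¬f(x)`.  Consequently, reading the output as the negation of `r`,
this module locally simulates `f` in an input-first way; moreover all its
local functions are disjunctive clauses. -/
theorem clauseModule_locally_simulates (S C : Type) [DecidableEq S] [Fintype C]
    (f : (S → Bool) → Bool) (a : S)
    (clause : C → (S → Bool) → Bool)
    (hclause : ∀ c : C, IsDisjClause (clause c))
    (hf : ∀ x : S → Bool, (f x = true ↔ ∀ c : C, clause c x = true)) :
    (∀ (x : S → Bool) (y : C ⊕ Unit → Bool) (i : S → Bool),
      y (Sum.inr ()) = !x a →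
      (∀ b : S, b ≠ a → i b = !x b) →
      -- the two-step (input-first) update: first all the `u_c` in parallel,
      -- then `r`; the resulting state of `r` is `¬ f x`
      clauseModule clause a (Sum.inr ())
          (Sum.elim
            (fun t : C ⊕ Unit => match t with
              | Sum.inl c => clauseModule clause a (Sum.inl c) (Sum.elim y i)
              | Sum.inr u => y (Sum.inr u))
            i)
        = !f x) ∧
    (∀ t : C ⊕ Unit, IsDisjClause (clauseModule clause a t)) := by
  constructor
  · intro x y i hy hi
    have hz : ∀ c : C,
        clauseModule clause a (Sum.inl c) (Sum.elim y i) = clause c x := by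
      intro c
      show clause c _ = clause c x
      congr 1
      funext s
      by_cases hs : s = a
      · subst hs; simp [hy]
      · simp [hs, hi s hs]
    show decide (∃ c : C, _) = !f x
    cases hfx : f x with
    | true =>
      simp only [Bool.not_true]
      rw [decide_eq_false_iff_not]
      rintro ⟨c, hc⟩
      simp only [Sum.elim_inl] at hc
      rw [hz c, (hf x).1 hfx c] at hc
      simp at hc
    | false =>
      simp only [Bool.not_false]
      rw [decide_eq_true_iff]
      by_contra h
      push_neg at h
      have : f x = true := (hf x).2 (fun c => by
        have := h c
        simp only [Sum.elim_inl, hz c] at this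
        exact eq_true_of_ne_false this)
      rw [hfx] at this; exact Bool.false_ne_true this
  · intro t
    cases t with
    | inl c =>
      obtain ⟨P, N, hPN, hg⟩ := hclause c
      set φ : S → (C ⊕ Unit) ⊕ S := fun v =>
        if v = a then Sum.inl (Sum.inr ()) else Sum.inr v with hφ
      have hφinj : Function.Injective φ := by
        intro v w hvw
        simp only [hφ] at hvw
        by_cases hv : v = a <;> by_cases hw : w = a <;>
          simp [hv, hw] at hvw <;> simp [hv, hw, hvw]
      refine ⟨φ '' N, φ '' P, ?_, ?_⟩
      · exact Set.disjoint_image_image fun v hv w hw h =>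
          (hPN.symm.ne_of_mem hv hw) (hφinj h)
      · intro z
        show clause c (fun s => if s = a then !z (Sum.inl (Sum.inr ())) else !z (Sum.inr s)) = true ↔ _
        rw [hg]
        have key : ∀ s, (if s = a then !z (Sum.inl (Sum.inr ())) else !z (Sum.inr s)) = !z (φ s) := by
          intro s; by_cases hs : s = a <;> simp [hφ, hs]
        simp only [key]
        constructor
        · rintro (⟨v, hv, hzv⟩ | ⟨v, hv, hzv⟩)
          · exact Or.inr ⟨φ v, ⟨v, hv, rfl⟩, by simpa using hzv⟩
          · exact Or.inl ⟨φ v, ⟨v, hv, rfl⟩, by simpa using hzv⟩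
        · rintro (⟨w, ⟨v, hv, rfl⟩, hzv⟩ | ⟨w, ⟨v, hv, rfl⟩, hzv⟩)
          · exact Or.inr ⟨v, hv, by simpa using hzv⟩
          · exact Or.inl ⟨v, hv, by simpa using hzv⟩
    | inr u =>
      refine ⟨∅, Set.range (fun c : C => Sum.inl (Sum.inl c)), by simp, ?_⟩
      intro z
      show decide (∃ c : C, z (Sum.inl (Sum.inl c)) = false) = true ↔ _
      rw [decide_eq_true_iff]
      constructor
      · rintro ⟨c, hc⟩
        exact Or.inr ⟨Sum.inl (Sum.inl c), ⟨c, rfl⟩, hc⟩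
      · rintro (⟨v, hv, _⟩ | ⟨w, ⟨c, rfl⟩, hzc⟩)
        · exact absurd hv (Set.notMem_empty v)
        · exact ⟨c, hzc⟩
end
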